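/- Let n > 0 be a real number, define the generalized binomial coefficient B(n,k) = (∏_{j=0}^{k−1} (n − j)) / k! for k ∈ ℕ, and let φ ∈ (−π, π). Then the series ∑_{k≥0} B(n,k)·sin(kφ) has sum 2^n · cos(φ/2)^n · sin(nφ/2) (in the sense of HasSum). -/

import Mathlib

/-!
The coefficients satisfy `(k + 1) |B(n, k + 1)| = (k - n) |B(n, k)|` for `k ≥ n`, so
`n |B(n, k)| = k |B(n, k)| - (k + 1) |B(n, k + 1)|` telescopes and `∑ |B(n, k)| < ∞`.
Hence the binomial series `∑ B(n, k) z^k`, which sums to `(1 + z)^n` on the open unit disc,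
converges uniformly on the closed disc, and by continuity it still sums to `(1 + z)^n` at
`z = e^{iφ}`. There `1 + e^{iφ} = 2 cos(φ/2) e^{iφ/2}`, and taking imaginary parts gives the claim.
-/

open Complex Metric

theorem Ring.choose_eq_prod_range_div_factorial {K : Type*} [Field K] [CharZero K] (a : K) (k : ℕ) :
    Ring.choose a k = (∏ j ∈ Finset.range k, (a - j)) / k.factorial := by
  rw [Ring.choose_eq_smul, smul_eq_mul, ← Polynomial.aeval_eq_smeval, Polynomial.aeval_def,
    ← Polynomial.eval_map, descPochhammer_map, descPochhammer_eval_eq_prod_range, inv_mul_eq_div]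

theorem Ring.succ_mul_choose_succ {K : Type*} [Field K] [CharZero K] (a : K) (k : ℕ) :
    (k + 1) * Ring.choose a (k + 1) = (a - k) * Ring.choose a k := by
  rw [Ring.choose_eq_prod_range_div_factorial, Ring.choose_eq_prod_range_div_factorial,
    Finset.prod_range_succ, Nat.factorial_succ]
  push_cast
  field_simp

theorem summable_of_mul_le_sub {b u : ℕ → ℝ} {c : ℝ} (hc : 0 < c) (hb : ∀ i, 0 ≤ b i)
    (hu : ∀ i, 0 ≤ u i) (h : ∀ i, c * b i ≤ u i - u (i + 1)) : Summable b := by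
  refine summable_of_sum_range_le (c := u 0 / c) hb fun m ↦ (le_div_iff₀' hc).2 ?_
  calc c * ∑ i ∈ Finset.range m, b i ≤ ∑ i ∈ Finset.range m, (u i - u (i + 1)) := by
        rw [Finset.mul_sum]; exact Finset.sum_le_sum fun i _ ↦ h i
    _ = u 0 - u m := Finset.sum_range_sub' u m
    _ ≤ u 0 := sub_le_self _ (hu m)

theorem Ring.succ_mul_abs_choose_succ_of_le {a : ℝ} {k : ℕ} (hk : a ≤ k) :
    (k + 1) * |Ring.choose a (k + 1)| = (k - a) * |Ring.choose a k| := by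
  have := congrArg abs (Ring.succ_mul_choose_succ a k)
  rwa [abs_mul, abs_mul, abs_of_pos (by positivity : (0 : ℝ) < k + 1),
    abs_of_nonpos (by linarith : a - k ≤ 0), neg_sub] at this

theorem Ring.summable_abs_choose {a : ℝ} (ha : 0 < a) : Summable fun k ↦ |Ring.choose a k| := by
  set N := ⌈a⌉₊
  rw [← summable_nat_add_iff N]
  refine summable_of_mul_le_sub ha (fun _ ↦ abs_nonneg _)
    (u := fun i ↦ (i + N : ℕ) * |Ring.choose a (i + N)|) (fun _ ↦ by positivity) fun i ↦ ?_
  have hle : a ≤ (i + N : ℕ) := (Nat.le_ceil a).trans (by gcongr; omega)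
  rw [show i + 1 + N = i + N + 1 by omega, Nat.cast_succ, succ_mul_abs_choose_succ_of_le hle]
  linarith

theorem Complex.hasSum_choose_mul_pow_of_norm_lt_one (a : ℂ) {z : ℂ} (hz : ‖z‖ < 1) :
    HasSum (fun k ↦ Ring.choose a k * z ^ k) ((1 + z) ^ a) := by
  have := one_add_cpow_hasFPowerSeriesOnBall_zero (a := a).hasSum (y := z)
    (by rwa [mem_eball_zero_iff, ← ofReal_norm, ENNReal.ofReal_lt_one])
  simpa [binomialSeries, mul_comm] using this

theorem Complex.hasSum_choose_mul_pow_of_norm_le_one {a : ℝ} (ha : 0 < a) {z : ℂ} (hz : ‖z‖ ≤ 1)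
    (hz' : 1 + z ∈ slitPlane) :
    HasSum (fun k ↦ Ring.choose (a : ℂ) k * z ^ k) ((1 + z) ^ (a : ℂ)) := by
  have hbound : ∀ k, ∀ w ∈ closedBall (0 : ℂ) 1,
      ‖Ring.choose (a : ℂ) k * w ^ k‖ ≤ |Ring.choose a k| := by
    intro k w hw
    rw [norm_mul, norm_pow, ← ofReal_choose, norm_real, Real.norm_eq_abs]
    exact mul_le_of_le_one_right (abs_nonneg _) (pow_le_one₀ (norm_nonneg w) (by simpa using hw))
  have hsum := (Ring.summable_abs_choose ha).of_norm_bounded fun k ↦ hbound k z (by simpa using hz)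
  set t := closedBall (0 : ℂ) 1 ∩ {w | 1 + w ∈ slitPlane}
  have hcont : ContinuousOn (fun w ↦ ∑' k, Ring.choose (a : ℂ) k * w ^ k) t :=
    (continuousOn_tsum (fun k ↦ by fun_prop) (Ring.summable_abs_choose ha) hbound).mono
      Set.inter_subset_left
  have hcpow : ContinuousOn (fun w : ℂ ↦ (1 + w) ^ (a : ℂ)) t :=
    (continuousOn_const.add continuousOn_id).cpow_const fun w hw ↦ hw.2
  have heq : Set.EqOn (fun w ↦ ∑' k, Ring.choose (a : ℂ) k * w ^ k) (fun w ↦ (1 + w) ^ (a : ℂ))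
      (ball 0 1) :=
    fun w hw ↦ (hasSum_choose_mul_pow_of_norm_lt_one a (by simpa using hw)).tsum_eq
  have hz_eq : ∑' k, Ring.choose (a : ℂ) k * z ^ k = (1 + z) ^ (a : ℂ) :=
    heq.of_subset_closure hcont hcpow
      (fun w hw ↦ ⟨ball_subset_closedBall hw, mem_slitPlane_of_norm_lt_one (by simpa using hw)⟩)
      (Set.inter_subset_left.trans (closure_ball 0 one_ne_zero).symm.subset)
      ⟨by simpa using hz, hz'⟩
  exact hz_eq ▸ hsum.hasSum

theorem Real.cos_half_pos_of_mem_Ioo {θ : ℝ} (hθ : θ ∈ Set.Ioo (-Real.pi) Real.pi) :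
    0 < Real.cos (θ / 2) :=
  Real.cos_pos_of_mem_Ioo ⟨by linarith [hθ.1], by linarith [hθ.2]⟩

theorem Complex.one_add_exp_mul_I (θ : ℝ) :
    1 + exp (θ * I) = ↑(2 * Real.cos (θ / 2)) * exp (↑(θ / 2) * I) := by
  have h : exp (↑(θ / 2) * I) * exp (-↑(θ / 2) * I) = 1 := by rw [← exp_add]; simp
  have h2 : exp (↑(θ / 2) * I) * exp (↑(θ / 2) * I) = exp (θ * I) := by
    rw [← exp_add]; push_cast; ring_nf
  rw [ofReal_mul, ofReal_cos, ofReal_ofNat, two_cos]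
  linear_combination -h - h2

theorem Complex.norm_one_add_exp_mul_I {θ : ℝ} (hθ : θ ∈ Set.Icc (-Real.pi) Real.pi) :
    ‖1 + exp (θ * I)‖ = 2 * Real.cos (θ / 2) := by
  have : 0 ≤ Real.cos (θ / 2) :=
    Real.cos_nonneg_of_mem_Icc ⟨by linarith [hθ.1], by linarith [hθ.2]⟩
  rw [one_add_exp_mul_I, norm_mul, norm_exp_ofReal_mul_I, norm_real,
    Real.norm_of_nonneg (by positivity), mul_one]

theorem Complex.arg_one_add_exp_mul_I {θ : ℝ} (hθ : θ ∈ Set.Ioo (-Real.pi) Real.pi) :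
    arg (1 + exp (θ * I)) = θ / 2 := by
  have := Real.cos_half_pos_of_mem_Ioo hθ
  rw [one_add_exp_mul_I, arg_real_mul _ (by positivity), arg_exp_mul_I, toIocMod_eq_self]
  constructor <;> linarith [hθ.1, hθ.2, Real.pi_pos]

theorem Complex.one_add_exp_mul_I_mem_slitPlane {θ : ℝ} (hθ : θ ∈ Set.Ioo (-Real.pi) Real.pi) :
    1 + exp (θ * I) ∈ slitPlane := by
  have := Real.cos_half_pos_of_mem_Ioo hθ
  rw [mem_slitPlane_iff_arg, arg_one_add_exp_mul_I hθ, ← norm_ne_zero_iff,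
    norm_one_add_exp_mul_I (Set.Ioo_subset_Icc_self hθ)]
  constructor <;> [linarith [hθ.2, Real.pi_pos]; positivity]

theorem binomial_series_sin (n : ℝ) (hn : 0 < n) (φ : ℝ) (hφ : φ ∈ Set.Ioo (-Real.pi) Real.pi) :
    HasSum
      (fun k : ℕ => ((∏ j ∈ Finset.range k, (n - j)) / k.factorial) * Real.sin (k * φ))
      ((2 : ℝ) ^ n * Real.cos (φ / 2) ^ n * Real.sin (n * φ / 2)) := by
  have hsum := (hasSum_choose_mul_pow_of_norm_le_one hn (norm_exp_ofReal_mul_I φ).le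
    (one_add_exp_mul_I_mem_slitPlane hφ)).mapL imCLM
  convert hsum using 1
  · ext k
    rw [imCLM_apply, ← exp_nat_mul, ← ofReal_choose, im_ofReal_mul, ← ofReal_natCast,
      ← mul_assoc, ← ofReal_mul, exp_ofReal_mul_I_im, Ring.choose_eq_prod_range_div_factorial]
  · rw [imCLM_apply, cpow_ofReal_im, norm_one_add_exp_mul_I (Set.Ioo_subset_Icc_self hφ),
      arg_one_add_exp_mul_I hφ, Real.mul_rpow zero_le_two (Real.cos_half_pos_of_mem_Ioo hφ).le]
    ring_nf
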